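/- Let G = (V,E) be a 4-regular graph on n vertices with no proper minimum cut (every cut S with 2 ≤ |S| ≤ n-2 satisfies |δ(S)| ≥ 6), let x_e = 1/2 for all e ∈ E, and let ν = ((n-1)/(2n))·x for n odd. Then ν lies in the matching polytope of G: ν(δ(v)) ≤ 1 for all vertices v, and ν(E(U)) ≤ (|U|-1)/2 for all odd-cardinality U ⊆ V. -/
import Mathlib

open Finset

/-- The set `δ(S)` of edges of a multigraph having exactly one endpoint in `S`. -/
def cutEdges {V E : Type*} [Fintype E] [DecidableEq V] [DecidableEq E]
    (ends : E → V × V) (S : Finset V) : Finset E :=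
  Finset.univ.filter (fun e =>
    ((ends e).1 ∈ S ∧ (ends e).2 ∉ S) ∨ ((ends e).1 ∉ S ∧ (ends e).2 ∈ S))

/-- The set `E(S)` of edges with both endpoints in `S`. -/
def inEdges {V E : Type*} [Fintype E] [DecidableEq V] [DecidableEq E]
    (ends : E → V × V) (S : Finset V) : Finset E :=
  Finset.univ.filter (fun e => (ends e).1 ∈ S ∧ (ends e).2 ∈ S)

lemma handshake {V E : Type*} [Fintype E] [DecidableEq V] [DecidableEq E]
    (ends : E → V × V) (hloop : ∀ e, (ends e).1 ≠ (ends e).2) (S : Finset V) :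
    2 * (inEdges ends S).card + (cutEdges ends S).card
      = ∑ v ∈ S, (cutEdges ends ({v} : Finset V)).card := by
  classical
  simp only [inEdges, cutEdges, Finset.card_filter, Finset.mem_singleton]
  rw [Finset.sum_comm, Finset.mul_sum, ← Finset.sum_add_distrib]
  refine Finset.sum_congr rfl fun e _ => ?_
  have h := hloop e
  have hcond : ∀ v : V,
      (((ends e).1 = v ∧ ¬(ends e).2 = v) ∨ (¬(ends e).1 = v ∧ (ends e).2 = v))
        ↔ ((ends e).1 = v ∨ (ends e).2 = v) := by
    intro v
    constructor
    · rintro (⟨h1, _⟩ | ⟨_, h2⟩)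
      · exact Or.inl h1
      · exact Or.inr h2
    · rintro (h1 | h2)
      · exact Or.inl ⟨h1, fun h2 => h (h1.trans h2.symm)⟩
      · exact Or.inr ⟨fun h1 => h (h1.trans h2.symm), h2⟩
  simp only [hcond]
  have : ∀ v : V, (if (ends e).1 = v ∨ (ends e).2 = v then (1:ℕ) else 0)
      = (if (ends e).1 = v then 1 else 0) + (if (ends e).2 = v then 1 else 0) := by
    intro v
    by_cases h1 : (ends e).1 = v <;> by_cases h2 : (ends e).2 = v <;>
      simp_all
  rw [Finset.sum_congr rfl fun v _ => this v, Finset.sum_add_distrib,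
    Finset.sum_ite_eq S (ends e).1 (fun _ => 1),
    Finset.sum_ite_eq S (ends e).2 (fun _ => 1)]
  by_cases h1 : (ends e).1 ∈ S <;> by_cases h2 : (ends e).2 ∈ S <;> simp [h1, h2]

/-- Let `G = (V, E)` be a 4-regular loopless graph on an odd number `n` of vertices with
no proper minimum cut (every cut `S` with `2 ≤ |S| ≤ n - 2` has `|δ(S)| ≥ 6`), let
`x_e = 1/2` for all edges, and let `ν = ((n-1)/(2n))·x`, i.e. `ν_e = (n-1)/(4n)`.  Then
`ν` lies in the matching polytope of `G`: `ν(δ(v)) ≤ 1` for every vertex `v`, and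
`ν(E(U)) ≤ (|U| - 1)/2` for every odd-cardinality `U ⊆ V`. -/
theorem degree_cut_point_in_matching_polytope {V E : Type*}
    [Fintype V] [Fintype E] [DecidableEq V] [DecidableEq E]
    (ends : E → V × V) (hloop : ∀ e, (ends e).1 ≠ (ends e).2)
    (hreg : ∀ v : V, (cutEdges ends ({v} : Finset V)).card = 4)
    (hnomin : ∀ S : Finset V, 2 ≤ S.card → S.card ≤ Fintype.card V - 2 →
      6 ≤ (cutEdges ends S).card)
    (hodd : Odd (Fintype.card V))
    (ν : E → ℝ)
    (hν : ∀ e, ν e = ((Fintype.card V : ℝ) - 1) / (4 * (Fintype.card V : ℝ))) :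
    (∀ v : V, ∑ e ∈ cutEdges ends ({v} : Finset V), ν e ≤ 1) ∧
    ∀ U : Finset V, Odd U.card →
      ∑ e ∈ inEdges ends U, ν e ≤ ((U.card : ℝ) - 1) / 2 := by
  set n := Fintype.card V with hn
  have hn1 : 1 ≤ n := hodd.pos
  have hnR : (1:ℝ) ≤ (n:ℝ) := by exact_mod_cast hn1
  have hval : ∀ (s : Finset E), ∑ e ∈ s, ν e = (s.card : ℝ) * (((n:ℝ) - 1) / (4 * n)) := by
    intro s
    rw [Finset.sum_congr rfl fun e _ => hν e, Finset.sum_const, nsmul_eq_mul]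
  constructor
  · intro v
    rw [hval, hreg v]
    push_cast
    rw [mul_div_assoc', div_le_one (by linarith)]
    linarith
  · intro U hU
    rw [hval]
    -- general reduction: it suffices to bound the number of in-edges
    have key : ∀ M : ℕ, (inEdges ends U).card ≤ M →
        ((M:ℝ)) * ((n:ℝ) - 1) * 2 ≤ ((U.card : ℝ) - 1) * (4 * n) →
        ((inEdges ends U).card : ℝ) * (((n:ℝ) - 1) / (4 * n)) ≤ ((U.card : ℝ) - 1) / 2 := by
      intro M hM hMle
      have hMc : ((inEdges ends U).card : ℝ) ≤ (M:ℝ) := by exact_mod_cast hM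
      rw [mul_div_assoc'] at *
      rw [div_le_div_iff₀ (by linarith) (by norm_num)]
      nlinarith
    have hhs := handshake ends hloop U
    rw [Finset.sum_congr rfl (fun v _ => hreg v), Finset.sum_const, smul_eq_mul, mul_comm] at hhs
    -- hhs : 2 * |E(U)| + |δ(U)| = 4 * U.card
    have h1le : 1 ≤ U.card := by
      rcases Nat.eq_zero_or_pos U.card with h0 | h
      · rw [h0] at hU; exact absurd hU (by simp)
      · exact h
    rcases eq_or_lt_of_le h1le with h1 | h3
    · -- U.card = 1
      have : (inEdges ends U).card = 0 := by
        rw [Finset.card_eq_zero]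
        ext e
        simp only [inEdges, Finset.mem_filter, Finset.mem_univ, true_and,
          Finset.notMem_empty, iff_false]
        rintro ⟨he1, he2⟩
        obtain ⟨v, hv⟩ := Finset.card_eq_one.mp h1.symm
        rw [hv, Finset.mem_singleton] at he1 he2
        exact hloop e (he1.trans he2.symm)
      rw [this, ← h1]
      norm_num
    · -- U.card ≥ 2, and odd so ≥ 3
      have hUn : U.card ≤ n := Finset.card_le_univ U
      have h3' : 3 ≤ U.card := by
        rcases hU with ⟨k, hk⟩; omega
      rcases eq_or_lt_of_le hUn with heq | hlt
      · -- U.card = n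
        have hM : (inEdges ends U).card ≤ 2 * n := by omega
        refine key (2 * n) hM ?_
        rw [heq]
        push_cast
        nlinarith
      · -- U.card < n; since both odd, U.card ≠ n - 1, so U.card ≤ n - 2
        have hne : U.card ≠ n - 1 := by
          intro h
          obtain ⟨a, ha⟩ := hU
          obtain ⟨b, hb⟩ := hodd
          omega
        have hle2 : U.card ≤ n - 2 := by omega
        have hc := hnomin U (by omega) hle2
        have hM : (inEdges ends U).card ≤ 2 * U.card - 3 := by omega
        refine key (2 * U.card - 3) hM ?_
        have : ((2 * U.card - 3 : ℕ) : ℝ) = 2 * (U.card : ℝ) - 3 := by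
          rw [Nat.cast_sub (by omega : 3 ≤ 2 * U.card)]; push_cast; ring
        rw [this]
        have hU3 : (3:ℝ) ≤ (U.card : ℝ) := by exact_mod_cast h3'
        nlinarith
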